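/- arXiv:1705.07785 — 2 statements merged into one kernel-verified Lean document; each statement's English description precedes it below -/
import Mathlib

section
/- Let q ≥ 3 be an integer and θ = 1 − 1/q. For every δ ∈ [0,θ], α_EP(δ) = min_{x ∈ [0,δ]} α_E(x)·(θ − δ)/(θ − x), where α_EP(δ) = 1 − H_q(θ − √(θ² − δθ)) for δ ∈ [0, (2q−3)/(q(q−1))] and α_EP(δ) = (θ − δ)(q−1)log_q(q−1)/(q−2) for δ ∈ [(2q−3)/(q(q−1)), θ], and α_E(x) = 1 − H_q(θ(1 − √(1 − x/θ))). -/
/-!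
Write `θ = 1 - 1/q` and `y(x) = θ(1 - √(1 - x/θ))`. Then `θ - x = (θ - y)²/θ`, so the objective
equals `(θ - δ)θ/ln q · ψ(y)` with `ψ(y) = (ln q - h(y))/(θ - y)²`, where `h` is the `q`-ary entropy
in nats; as `y` increases with `x`, we must minimise `ψ` on `[0, y(δ)]`.

We have `ψ' = N/(θ - y)³` with `N = 2(ln q - h) - h'·(θ - y)`, and `N(1/q) = N(θ) = N'(θ) = 0`.
Since `N'' = ((1 - y)⁻² - y⁻²)(θ - y)`, `N` is concave on `(0, 1/2]` and, because `N'(θ) = 0`,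
decreasing on `[1/2, θ]`; so `N ≥ 0` on `[1/2, θ]`, and concavity then forces `N ≤ 0` on `(0, 1/q]`
and `N ≥ 0` on `[1/q, 1/2]`. Thus `ψ` decreases up to `1/q` and increases afterwards, and the
minimum is attained at `y = min(y(δ), 1/q)`, i.e. at `x = min(δ, δ*)` where `y(δ*) = 1/q` for
`δ* = (2q - 3)/(q(q - 1))`. The two cases give the Elias and the Plotkin branches of `α_EP`.
-/

open Filter Real Set

/-- The q-ary entropy function. -/
noncomputable def qEntropy (q : ℕ) (x : ℝ) : ℝ :=
  x * Real.logb q (((q : ℝ) - 1) / x) + (1 - x) * Real.logb q (1 / (1 - x))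

/-- The Elias bound `α_E` (with `θ = 1 - 1/q`). -/
noncomputable def alphaE (q : ℕ) (x : ℝ) : ℝ :=
  1 - qEntropy q ((1 - 1 / (q : ℝ)) * (1 - Real.sqrt (1 - x / (1 - 1 / (q : ℝ)))))

/-- The hybrid Elias-Plotkin bound `α_EP` (with `θ = 1 - 1/q`). -/
noncomputable def alphaEP (q : ℕ) (δ : ℝ) : ℝ :=
  if δ ≤ (2 * (q : ℝ) - 3) / ((q : ℝ) * ((q : ℝ) - 1)) then
    1 - qEntropy q ((1 - 1 / (q : ℝ)) -
      Real.sqrt ((1 - 1 / (q : ℝ)) ^ 2 - δ * (1 - 1 / (q : ℝ))))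
  else ((1 - 1 / (q : ℝ)) - δ) * (((q : ℝ) - 1) * Real.logb q ((q : ℝ) - 1) / ((q : ℝ) - 2))

noncomputable def natEntropy (Q y : ℝ) : ℝ :=
  y * log (Q - 1) + negMulLog y + negMulLog (1 - y)

noncomputable def natEntropyDeriv (Q y : ℝ) : ℝ :=
  log (Q - 1) - log y + log (1 - y)

noncomputable def eliasRatio (Q y : ℝ) : ℝ :=
  (log Q - natEntropy Q y) / (1 - 1 / Q - y) ^ 2

noncomputable def eliasRatioDerivNumer (Q y : ℝ) : ℝ :=
  2 * (log Q - natEntropy Q y) - natEntropyDeriv Q y * (1 - 1 / Q - y)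

theorem one_sub_one_div_pos {Q : ℝ} (hQ : 1 < Q) : 0 < 1 - 1 / Q := by
  rw [sub_pos, div_lt_one (by positivity)]
  exact hQ

theorem one_div_lt_half {Q : ℝ} (hQ : 2 < Q) : 1 / Q < 1 / 2 :=
  one_div_lt_one_div_of_lt two_pos hQ

section Derivatives

variable {Q y : ℝ}

theorem continuous_natEntropy (Q : ℝ) : Continuous (natEntropy Q) := by
  unfold natEntropy; fun_prop

theorem hasDerivAt_natEntropy (hy0 : 0 < y) (hy1 : y < 1) :
    HasDerivAt (natEntropy Q) (natEntropyDeriv Q y) y := by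
  have h1 := (hasDerivAt_negMulLog (sub_pos.2 hy1).ne').comp y ((hasDerivAt_id' y).const_sub 1)
  exact (((hasDerivAt_mul_const (log (Q - 1))).add (hasDerivAt_negMulLog hy0.ne')).add
    h1).congr_deriv (by rw [natEntropyDeriv]; ring)

theorem hasDerivAt_natEntropyDeriv (hy0 : 0 < y) (hy1 : y < 1) :
    HasDerivAt (natEntropyDeriv Q) (-(y⁻¹ + (1 - y)⁻¹)) y := by
  have h1 := (hasDerivAt_log (sub_pos.2 hy1).ne').comp y ((hasDerivAt_id' y).const_sub 1)
  exact (((hasDerivAt_const y (log (Q - 1))).sub (hasDerivAt_log hy0.ne')).add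
    h1).congr_deriv (by ring)

theorem hasDerivAt_eliasRatioDerivNumer (hy0 : 0 < y) (hy1 : y < 1) :
    HasDerivAt (eliasRatioDerivNumer Q)
      ((y⁻¹ + (1 - y)⁻¹) * (1 - 1 / Q - y) - natEntropyDeriv Q y) y :=
  ((((hasDerivAt_natEntropy hy0 hy1).const_sub (log Q)).const_mul 2).sub
    ((hasDerivAt_natEntropyDeriv hy0 hy1).mul
      ((hasDerivAt_id' y).const_sub (1 - 1 / Q)))).congr_deriv (by ring)

theorem hasDerivAt_eliasRatioDerivNumer_deriv (hy0 : 0 < y) (hy1 : y < 1) :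
    HasDerivAt (fun y ↦ (y⁻¹ + (1 - y)⁻¹) * (1 - 1 / Q - y) - natEntropyDeriv Q y)
      ((((1 - y) ^ 2)⁻¹ - (y ^ 2)⁻¹) * (1 - 1 / Q - y)) y := by
  have h1 := (hasDerivAt_inv (sub_pos.2 hy1).ne').comp y ((hasDerivAt_id' y).const_sub 1)
  exact ((((hasDerivAt_inv hy0.ne').add h1).mul ((hasDerivAt_id' y).const_sub (1 - 1 / Q))).sub
    (hasDerivAt_natEntropyDeriv hy0 hy1)).congr_deriv
    (by simp only [Pi.add_apply, Function.comp_apply]; ring)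

theorem hasDerivAt_eliasRatio (hy0 : 0 < y) (hy1 : y < 1) (hyθ : y ≠ 1 - 1 / Q) :
    HasDerivAt (eliasRatio Q) (eliasRatioDerivNumer Q y / (1 - 1 / Q - y) ^ 3) y := by
  have hne : 1 - 1 / Q - y ≠ 0 := sub_ne_zero.2 hyθ.symm
  exact (((hasDerivAt_natEntropy hy0 hy1).const_sub (log Q)).div
    (((hasDerivAt_id' y).const_sub (1 - 1 / Q)).pow 2) (pow_ne_zero 2 hne)).congr_deriv
    (by simp only [eliasRatioDerivNumer, Pi.pow_apply]; field_simp; ring)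

end Derivatives

section SpecialValues

variable {Q : ℝ}

theorem log_one_sub_one_div (hQ : 1 < Q) : log (1 - 1 / Q) = log (Q - 1) - log Q := by
  rw [← log_div (by linarith) (by positivity)]
  congr 1
  field_simp

theorem natEntropy_one_div (hQ : 1 < Q) :
    natEntropy Q (1 / Q) = log Q - (Q - 2) / Q * log (Q - 1) := by
  rw [natEntropy, negMulLog, negMulLog, log_one_sub_one_div hQ, one_div, log_inv]
  field_simp
  ring

theorem natEntropyDeriv_one_div (hQ : 1 < Q) :
    natEntropyDeriv Q (1 / Q) = 2 * log (Q - 1) := by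
  rw [natEntropyDeriv, log_one_sub_one_div hQ, one_div, log_inv]
  ring

theorem eliasRatioDerivNumer_one_div (hQ : 1 < Q) : eliasRatioDerivNumer Q (1 / Q) = 0 := by
  rw [eliasRatioDerivNumer, natEntropy_one_div hQ, natEntropyDeriv_one_div hQ]
  field_simp
  ring

theorem natEntropy_one_sub_one_div (hQ : 1 < Q) : natEntropy Q (1 - 1 / Q) = log Q := by
  rw [natEntropy, sub_sub_cancel, negMulLog, negMulLog, log_one_sub_one_div hQ, one_div, log_inv]
  field_simp
  ring

theorem natEntropyDeriv_one_sub_one_div (hQ : 1 < Q) :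
    natEntropyDeriv Q (1 - 1 / Q) = 0 := by
  rw [natEntropyDeriv, sub_sub_cancel, log_one_sub_one_div hQ, one_div, log_inv]
  ring

theorem eliasRatioDerivNumer_one_sub_one_div (hQ : 1 < Q) :
    eliasRatioDerivNumer Q (1 - 1 / Q) = 0 := by
  rw [eliasRatioDerivNumer, natEntropy_one_sub_one_div hQ]
  ring

end SpecialValues

section Sign

variable {Q y : ℝ}

theorem eliasRatioDerivNumer_antitoneOn (hQ : 2 < Q) :
    AntitoneOn (eliasRatioDerivNumer Q) (Icc (1 / 2) (1 - 1 / Q)) := by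
  have hQ' : 0 < 1 / Q := by positivity
  have hmem : ∀ y ∈ Icc (1 / 2 : ℝ) (1 - 1 / Q), 0 < y ∧ y < 1 := fun y hy ↦
    ⟨by linarith [hy.1], by linarith [hy.2]⟩
  set N' := fun y ↦ (y⁻¹ + (1 - y)⁻¹) * (1 - 1 / Q - y) - natEntropyDeriv Q y
  have hN'_mono : MonotoneOn N' (Icc (1 / 2) (1 - 1 / Q)) := by
    refine monotoneOn_of_hasDerivWithinAt_nonneg (convex_Icc _ _)
      (fun y hy ↦ (hasDerivAt_eliasRatioDerivNumer_deriv (hmem y hy).1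
        (hmem y hy).2).continuousAt.continuousWithinAt)
      (fun y hy ↦ (hasDerivAt_eliasRatioDerivNumer_deriv (hmem y (interior_subset hy)).1
        (hmem y (interior_subset hy)).2).hasDerivWithinAt) ?_
    rw [interior_Icc]
    rintro y ⟨hy1, hy2⟩
    refine mul_nonneg (sub_nonneg.2 (inv_anti₀ (pow_pos (by linarith) 2) ?_)) (by linarith)
    exact pow_le_pow_left₀ (by linarith) (by linarith) 2
  have hN'θ : N' (1 - 1 / Q) = 0 := by
    simp only [N', sub_self, mul_zero, natEntropyDeriv_one_sub_one_div (by linarith : 1 < Q)]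
  have hN'_nonpos : ∀ y ∈ Icc (1 / 2 : ℝ) (1 - 1 / Q), N' y ≤ 0 := fun y hy ↦
    hN'θ ▸ hN'_mono hy (right_mem_Icc.2 (hy.1.trans hy.2)) hy.2
  refine antitoneOn_of_hasDerivWithinAt_nonpos (convex_Icc _ _)
    (fun y hy ↦ (hasDerivAt_eliasRatioDerivNumer (hmem y hy).1
      (hmem y hy).2).continuousAt.continuousWithinAt)
    (fun y hy ↦ (hasDerivAt_eliasRatioDerivNumer (hmem y (interior_subset hy)).1
      (hmem y (interior_subset hy)).2).hasDerivWithinAt)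
    (fun y hy ↦ hN'_nonpos y (interior_subset hy))

theorem eliasRatioDerivNumer_concaveOn (hQ : 2 < Q) :
    ConcaveOn ℝ (Ioc 0 (1 / 2)) (eliasRatioDerivNumer Q) := by
  have hmem : ∀ y ∈ Ioc (0 : ℝ) (1 / 2), 0 < y ∧ y < 1 := fun y hy ↦
    ⟨hy.1, by linarith [hy.2]⟩
  refine concaveOn_of_hasDerivWithinAt2_nonpos (convex_Ioc _ _)
    (fun y hy ↦ (hasDerivAt_eliasRatioDerivNumer (hmem y hy).1
      (hmem y hy).2).continuousAt.continuousWithinAt)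
    (fun y hy ↦ (hasDerivAt_eliasRatioDerivNumer (hmem y (interior_subset hy)).1
      (hmem y (interior_subset hy)).2).hasDerivWithinAt)
    (fun y hy ↦ (hasDerivAt_eliasRatioDerivNumer_deriv (hmem y (interior_subset hy)).1
      (hmem y (interior_subset hy)).2).hasDerivWithinAt) ?_
  rw [interior_Ioc]
  rintro y ⟨hy1, hy2⟩
  have hθ : 1 / 2 < 1 - 1 / Q := by
    have : 1 / Q < 1 / 2 := one_div_lt_half hQ
    linarith
  refine mul_nonpos_of_nonpos_of_nonneg (sub_nonpos.2 (inv_anti₀ (by positivity) ?_))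
    (by linarith)
  exact pow_le_pow_left₀ hy1.le (by linarith) 2

theorem eliasRatioDerivNumer_nonneg_of_half_le (hQ : 2 < Q) (hy : 1 / 2 ≤ y)
    (hyθ : y ≤ 1 - 1 / Q) : 0 ≤ eliasRatioDerivNumer Q y := by
  have := eliasRatioDerivNumer_antitoneOn hQ ⟨hy, hyθ⟩ ⟨hy.trans hyθ, le_rfl⟩ hyθ
  rwa [eliasRatioDerivNumer_one_sub_one_div (by linarith)] at this

theorem eliasRatioDerivNumer_nonpos (hQ : 2 < Q) (hy0 : 0 < y) (hy : y ≤ 1 / Q) :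
    eliasRatioDerivNumer Q y ≤ 0 := by
  rcases hy.lt_or_eq with hy | rfl
  · have hQ2 := one_div_lt_half hQ
    have hhalf : 0 ≤ eliasRatioDerivNumer Q (1 / 2) :=
      eliasRatioDerivNumer_nonneg_of_half_le hQ le_rfl (by linarith)
    -- concavity: the chord slope on `[y, 1/Q]` dominates the one on `[1/Q, 1/2]`, which is `≥ 0`
    have hslope := (eliasRatioDerivNumer_concaveOn hQ).slope_anti_adjacent ⟨hy0, by linarith⟩
      ⟨by norm_num, le_rfl⟩ hy hQ2
    rw [eliasRatioDerivNumer_one_div (by linarith), zero_sub] at hslope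
    have := (div_nonneg (sub_nonneg.2 hhalf) (by linarith)).trans hslope
    rw [le_div_iff₀ (by linarith)] at this
    linarith
  · exact (eliasRatioDerivNumer_one_div (by linarith)).le

theorem eliasRatioDerivNumer_nonneg (hQ : 2 < Q) (hy : 1 / Q ≤ y) (hyθ : y ≤ 1 - 1 / Q) :
    0 ≤ eliasRatioDerivNumer Q y := by
  rcases le_total y (1 / 2) with hy2 | hy2
  · have hQ0 : 0 < 1 / Q := by positivity
    have hy_mem : y ∈ segment ℝ (1 / Q) (1 / 2) := by
      rw [segment_eq_Icc (hy.trans hy2)]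
      exact ⟨hy, hy2⟩
    have hseg := (eliasRatioDerivNumer_concaveOn hQ).ge_on_segment ⟨hQ0, by linarith⟩
      ⟨by norm_num, le_rfl⟩ hy_mem
    rw [eliasRatioDerivNumer_one_div (by linarith)] at hseg
    exact (le_min le_rfl (eliasRatioDerivNumer_nonneg_of_half_le hQ le_rfl (by linarith))).trans
      hseg
  · exact eliasRatioDerivNumer_nonneg_of_half_le hQ hy2 hyθ

end Sign

section EliasRatio

variable {Q y : ℝ}

theorem continuousOn_eliasRatio {s : Set ℝ} (hs : ∀ y ∈ s, y ≠ 1 - 1 / Q) :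
    ContinuousOn (eliasRatio Q) s :=
  ((continuous_const.sub (continuous_natEntropy Q)).continuousOn).div (by fun_prop)
    fun y hy ↦ pow_ne_zero 2 (sub_ne_zero.2 (hs y hy).symm)

theorem eliasRatio_antitoneOn (hQ : 2 < Q) : AntitoneOn (eliasRatio Q) (Icc 0 (1 / Q)) := by
  have hQ2 := one_div_lt_half hQ
  have hlt : ∀ y ∈ Icc 0 (1 / Q), y < 1 - 1 / Q := fun y hy ↦ by linarith [hy.2]
  refine antitoneOn_of_hasDerivWithinAt_nonpos (convex_Icc _ _)
    (continuousOn_eliasRatio fun y hy ↦ (hlt y hy).ne) (fun y hy ↦ ?_) (fun y hy ↦ ?_)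
    (f' := fun y ↦ eliasRatioDerivNumer Q y / (1 - 1 / Q - y) ^ 3)
  all_goals
    rw [interior_Icc] at hy
    have hyθ := hlt y (Ioo_subset_Icc_self hy)
  · exact (hasDerivAt_eliasRatio hy.1 (by linarith [hy.2]) hyθ.ne).hasDerivWithinAt
  · exact div_nonpos_of_nonpos_of_nonneg (eliasRatioDerivNumer_nonpos hQ hy.1 hy.2.le)
      (pow_nonneg (by linarith) 3)

theorem eliasRatio_monotoneOn (hQ : 2 < Q) :
    MonotoneOn (eliasRatio Q) (Ico (1 / Q) (1 - 1 / Q)) := by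
  have hQ0 : 0 < 1 / Q := by positivity
  refine monotoneOn_of_hasDerivWithinAt_nonneg (convex_Ico _ _)
    (continuousOn_eliasRatio fun y hy ↦ hy.2.ne) (fun y hy ↦ ?_) (fun y hy ↦ ?_)
    (f' := fun y ↦ eliasRatioDerivNumer Q y / (1 - 1 / Q - y) ^ 3)
  all_goals rw [interior_Ico] at hy
  · exact (hasDerivAt_eliasRatio (hQ0.trans hy.1) (by linarith [hy.2]) hy.2.ne).hasDerivWithinAt
  · exact div_nonneg (eliasRatioDerivNumer_nonneg hQ hy.1.le hy.2.le)
      (pow_nonneg (by linarith [hy.2]) 3)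

theorem eliasRatio_one_div_le (hQ : 2 < Q) (hy0 : 0 ≤ y) (hyθ : y < 1 - 1 / Q) :
    eliasRatio Q (1 / Q) ≤ eliasRatio Q y := by
  have hQ2 := one_div_lt_half hQ
  rcases le_total y (1 / Q) with hy | hy
  · exact eliasRatio_antitoneOn hQ ⟨hy0, hy⟩ ⟨hy0.trans hy, le_rfl⟩ hy
  · exact eliasRatio_monotoneOn hQ ⟨le_rfl, by linarith⟩ ⟨hy, hyθ⟩ hy

theorem eliasRatio_min_le {b : ℝ} (hQ : 2 < Q) (hy0 : 0 ≤ y) (hyb : y ≤ b)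
    (hbθ : b < 1 - 1 / Q) : eliasRatio Q (min b (1 / Q)) ≤ eliasRatio Q y := by
  rcases le_total b (1 / Q) with hb | hb
  · rw [min_eq_left hb]
    exact eliasRatio_antitoneOn hQ ⟨hy0, hyb.trans hb⟩ ⟨hy0.trans hyb, hb⟩ hyb
  · rw [min_eq_right hb]
    exact eliasRatio_one_div_le hQ hy0 (hyb.trans_lt hbθ)

end EliasRatio

noncomputable def eliasRadius (Q x : ℝ) : ℝ :=
  (1 - 1 / Q) * (1 - sqrt (1 - x / (1 - 1 / Q)))

noncomputable def plotkinThreshold (Q : ℝ) : ℝ :=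
  (2 * Q - 3) / (Q * (Q - 1))

section EliasRadius

variable {Q x : ℝ}

theorem eliasRadius_monotone (hQ : 1 < Q) : Monotone (eliasRadius Q) := by
  have hθ := one_sub_one_div_pos hQ
  intro x x' hx
  unfold eliasRadius
  gcongr

theorem eliasRadius_nonneg (hQ : 1 < Q) (hx : 0 ≤ x) : 0 ≤ eliasRadius Q x := by
  simpa [eliasRadius] using eliasRadius_monotone hQ hx

theorem one_sub_one_div_sub_eliasRadius_sq (hQ : 1 < Q) (hx : x ≤ 1 - 1 / Q) :
    (1 - 1 / Q - eliasRadius Q x) ^ 2 = (1 - 1 / Q) * (1 - 1 / Q - x) := by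
  have hθ := one_sub_one_div_pos hQ
  have hsqrt : sqrt (1 - x / (1 - 1 / Q)) ^ 2 = 1 - x / (1 - 1 / Q) :=
    sq_sqrt (by rw [sub_nonneg, div_le_one hθ]; exact hx)
  rw [eliasRadius, show ∀ a b : ℝ, a - a * (1 - b) = a * b by intros; ring, mul_pow, hsqrt]
  have : Q - 1 ≠ 0 := sub_ne_zero.2 hQ.ne'
  field_simp

theorem eliasRadius_lt (hQ : 1 < Q) (hx : x < 1 - 1 / Q) : eliasRadius Q x < 1 - 1 / Q := by
  have hθ := one_sub_one_div_pos hQ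
  have hsqrt : 0 < sqrt (1 - x / (1 - 1 / Q)) := by
    rw [sqrt_pos, sub_pos, div_lt_one hθ]; exact hx
  rw [eliasRadius]
  nlinarith

theorem one_sub_one_div_sub_plotkinThreshold (hQ : 1 < Q) :
    1 - 1 / Q - plotkinThreshold Q = (Q - 2) ^ 2 / (Q * (Q - 1)) := by
  have : Q - 1 ≠ 0 := sub_ne_zero.2 hQ.ne'
  rw [plotkinThreshold]
  field_simp
  ring

theorem plotkinThreshold_nonneg (hQ : 3 / 2 ≤ Q) : 0 ≤ plotkinThreshold Q :=
  div_nonneg (by linarith) (mul_nonneg (by linarith) (by linarith))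

theorem plotkinThreshold_lt (hQ : 2 < Q) : plotkinThreshold Q < 1 - 1 / Q := by
  have := one_sub_one_div_sub_plotkinThreshold (by linarith : 1 < Q)
  have : 0 < (Q - 2) ^ 2 / (Q * (Q - 1)) :=
    div_pos (pow_pos (by linarith) 2) (mul_pos (by linarith) (by linarith))
  linarith

theorem eliasRadius_plotkinThreshold (hQ : 2 ≤ Q) :
    eliasRadius Q (plotkinThreshold Q) = 1 / Q := by
  have hQ1 : Q - 1 ≠ 0 := by linarith
  have hQ0 : Q ≠ 0 := by linarith
  have h : 1 - plotkinThreshold Q / (1 - 1 / Q) = ((Q - 2) / (Q - 1)) ^ 2 := by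
    rw [plotkinThreshold]
    field_simp
    ring
  rw [eliasRadius, h, sqrt_sq (div_nonneg (by linarith) (by linarith))]
  field_simp
  ring

end EliasRadius

section Bounds

variable {q : ℕ} {x δ : ℝ}

theorem qEntropy_eq_natEntropy_div_log (hq : q ≠ 1) (y : ℝ) :
    qEntropy q y = natEntropy q y / log q := by
  have hq1 : (q : ℝ) - 1 ≠ 0 := sub_ne_zero.2 (by exact_mod_cast hq)
  rcases eq_or_ne y 0 with rfl | hy
  · simp [qEntropy, natEntropy]
  rw [qEntropy, natEntropy, logb, logb, log_div hq1 hy, one_div, log_inv, negMulLog, negMulLog]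
  ring

theorem alphaE_mul_div_eq (hq : 1 < q) (hx : x < 1 - 1 / (q : ℝ)) (c : ℝ) :
    alphaE q x * c / (1 - 1 / (q : ℝ) - x) =
      c * (1 - 1 / (q : ℝ)) / log q * eliasRatio q (eliasRadius q x) := by
  have hq' : (1 : ℝ) < q := by exact_mod_cast hq
  have hlog : log q ≠ 0 := (log_pos hq').ne'
  have hθ : (1 : ℝ) - 1 / q ≠ 0 := (one_sub_one_div_pos hq').ne'
  have hθx : (1 : ℝ) - 1 / q - x ≠ 0 := (sub_pos.2 hx).ne'
  rw [alphaE, ← eliasRadius, qEntropy_eq_natEntropy_div_log (by omega), eliasRatio,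
    one_sub_one_div_sub_eliasRadius_sq hq' hx.le]
  generalize 1 - 1 / (q : ℝ) = θ at *
  field_simp

theorem alphaE_plotkinThreshold (hq : 2 < q) :
    alphaE q (plotkinThreshold q) = (q - 2) / q * logb q (q - 1) := by
  have hq' : (2 : ℝ) < q := by exact_mod_cast hq
  have hlog : log q ≠ 0 := (log_pos (by linarith)).ne'
  rw [alphaE, ← eliasRadius, eliasRadius_plotkinThreshold hq'.le,
    qEntropy_eq_natEntropy_div_log (by omega), natEntropy_one_div (by linarith), logb]
  field_simp
  ring

theorem alphaEP_of_le (hq : 1 < q) (h : δ ≤ plotkinThreshold q) : alphaEP q δ = alphaE q δ := by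
  have hθ : 0 < (1 : ℝ) - 1 / q := one_sub_one_div_pos (by exact_mod_cast hq)
  have hsqrt : sqrt ((1 - 1 / (q : ℝ)) ^ 2 - δ * (1 - 1 / q)) =
      (1 - 1 / q) * sqrt (1 - δ / (1 - 1 / q)) := by
    rw [← sqrt_sq hθ.le, ← sqrt_mul (sq_nonneg _), sqrt_sq hθ.le]
    congr 1
    generalize 1 - 1 / (q : ℝ) = θ at *
    field_simp
  rw [plotkinThreshold] at h
  rw [alphaEP, if_pos h, hsqrt, alphaE, mul_one_sub]

theorem alphaEP_of_lt (hq : 2 < q) (h : plotkinThreshold q < δ) :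
    alphaEP q δ = alphaE q (plotkinThreshold q) * (1 - 1 / (q : ℝ) - δ) /
      (1 - 1 / (q : ℝ) - plotkinThreshold q) := by
  have hq' : (2 : ℝ) < q := by exact_mod_cast hq
  have h' : ¬δ ≤ (2 * (q : ℝ) - 3) / (q * (q - 1)) := h.not_ge
  rw [alphaEP, if_neg h', alphaE_plotkinThreshold hq,
    one_sub_one_div_sub_plotkinThreshold (by linarith)]
  have : (q : ℝ) - 2 ≠ 0 := by linarith
  have : (q : ℝ) - 1 ≠ 0 := by linarith
  field_simp

end Bounds

/-- `α_EP(δ)` is the minimum of `α_E(x)(θ-δ)/(θ-x)` over `x ∈ [0,δ]`. -/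
theorem stmt16 (q : ℕ) (hq : 3 ≤ q) (δ : ℝ)
    (hδ : δ ∈ Set.Icc (0 : ℝ) (1 - 1 / (q : ℝ))) :
    IsLeast
      ((fun x => alphaE q x * ((1 - 1 / (q : ℝ)) - δ) / ((1 - 1 / (q : ℝ)) - x)) ''
        Set.Icc (0 : ℝ) δ)
      (alphaEP q δ) := by
  have hq' : (2 : ℝ) < q := by exact_mod_cast hq
  obtain ⟨hδ0, hδθ⟩ := hδ
  have hx₀ : min δ (plotkinThreshold q) ∈ Icc 0 δ :=
    ⟨le_min hδ0 (plotkinThreshold_nonneg (by linarith)), min_le_left _ _⟩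
  have hEP : alphaEP q δ = alphaE q (min δ (plotkinThreshold q)) * (1 - 1 / (q : ℝ) - δ) /
      (1 - 1 / (q : ℝ) - min δ (plotkinThreshold q)) := by
    rcases le_or_gt δ (plotkinThreshold q) with h | h
    · have hδθ' : (1 : ℝ) - 1 / q - δ ≠ 0 :=
        (sub_pos.2 (h.trans_lt (plotkinThreshold_lt hq'))).ne'
      rw [min_eq_left h, mul_div_assoc, div_self hδθ', mul_one, alphaEP_of_le (by omega) h]
    · rw [min_eq_right h.le, alphaEP_of_lt hq h]
  refine ⟨⟨_, hx₀, hEP.symm⟩, ?_⟩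
  rintro _ ⟨x, hx, rfl⟩
  dsimp only
  rcases hδθ.eq_or_lt with rfl | hδθ
  · simp only [hEP, sub_self, mul_zero, zero_div, le_refl]
  have hC : 0 ≤ (1 - 1 / (q : ℝ) - δ) * (1 - 1 / q) / log q :=
    div_nonneg (mul_nonneg (by linarith) (one_sub_one_div_pos (by linarith)).le)
      (log_nonneg (by linarith))
  rw [hEP, alphaE_mul_div_eq (by omega) (hx₀.2.trans_lt hδθ),
    alphaE_mul_div_eq (by omega) (hx.2.trans_lt hδθ)]
  refine mul_le_mul_of_nonneg_left ?_ hC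
  rw [(eliasRadius_monotone (by linarith)).map_min, eliasRadius_plotkinThreshold hq'.le]
  exact eliasRatio_min_le hq' (eliasRadius_nonneg (by linarith) hx.1)
    (eliasRadius_monotone (by linarith) hx.2) (eliasRadius_lt (by linarith) hδθ)
end

section
/- Let q ≥ 2 be an integer, θ = 1 − 1/q, ξ(x) = (√(θ(1−x)) − √(x(1−θ)))² for x ∈ [0,θ], and let α_MRRW(x) = H_q(ξ(x)) be the first MRRW bound. If q = 2 then α_MRRW is convex on [0,θ]. If q ≥ 3 then there exists δ_MRRW with 1/2 − √(q−1)/q < δ_MRRW < (1 − 2/q)² such that α_MRRW is concave on [0, δ_MRRW] and convex on [δ_MRRW, θ]. -/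
open Filter Real Set

/-- `ξ(x) = (√(θ(1-x)) - √(x(1-θ)))²` with `θ = 1 - 1/q`. -/
noncomputable def xiFn (q : ℕ) (x : ℝ) : ℝ :=
  (Real.sqrt ((1 - 1 / (q : ℝ)) * (1 - x)) -
    Real.sqrt (x * (1 - (1 - 1 / (q : ℝ))))) ^ 2

/-- The first MRRW bound `α_MRRW(x) = H_q(ξ(x))`. -/
noncomputable def alphaMRRW (q : ℕ) (x : ℝ) : ℝ :=
  qEntropy q (xiFn q x)

/-!
Write `θ = 1 - 1/q`, `c = √(θ(1-θ))` and `s = √(x(1-x))`. Then `ξ = θ + (1-2θ)x - 2cs` and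
`ξ(1-ξ) = (c(1-2x) + (2θ-1)s)²` (with `x = sin²φ`, `θ = sin²β` one has `ξ = sin²(β-φ)`).
Differentiating twice gives `α'' = c / (2 s³ log q) · Φ` with `Φ = log((q-1)(1-ξ)/ξ) - 2s/c`, and
`Φ'` has the sign of `4cs - (2θ-1)(1-2x)`, that is of `x - (1/2 - c)`. So `Φ`, which vanishes at
`0`, decreases up to `1/2 - c` and increases afterwards. For `q = 2` the turning point is `0` and
`Φ ≥ 0`. For `q ≥ 3`, `Φ(1/2 - c) < 0 < Φ((2θ-1)²) = 2 log(q-1) - 4(2θ-1)`, the last inequality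
being `log((1+t)/(1-t)) > 2t`; the zero `δ` of `Φ` in between separates concavity from convexity.
-/

namespace MRRW

noncomputable def sd (x : ℝ) : ℝ := √(x * (1 - x))

noncomputable def xi (θ x : ℝ) : ℝ := θ + (1 - 2 * θ) * x - 2 * sd θ * sd x

noncomputable def xiDeriv (θ x : ℝ) : ℝ := 1 - 2 * θ - sd θ * (1 - 2 * x) / sd x

/-- `log q • H_q` for `θ = 1 - 1/q`, since then `θ / (1 - θ) = q - 1`. -/
noncomputable def entropy (θ y : ℝ) : ℝ :=
  y * log (θ / (1 - θ)) + negMulLog y + negMulLog (1 - y)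

noncomputable def entropyDeriv (θ y : ℝ) : ℝ := log (θ / (1 - θ)) - log y + log (1 - y)

noncomputable def alpha (θ x : ℝ) : ℝ := entropy θ (xi θ x)

noncomputable def alphaDeriv (θ x : ℝ) : ℝ := entropyDeriv θ (xi θ x) * xiDeriv θ x

/-- Up to the positive factor `sd θ / (2 sd x ^ 3)`, the second derivative of `alpha θ`. -/
noncomputable def curvature (θ x : ℝ) : ℝ := entropyDeriv θ (xi θ x) - 2 * sd x / sd θ

noncomputable def curvatureDeriv (θ x : ℝ) : ℝ :=
  (4 * sd θ * sd x - (2 * θ - 1) * (1 - 2 * x)) / (sd θ * sd (xi θ x))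

variable {θ x : ℝ}

lemma sd_nonneg (x : ℝ) : 0 ≤ sd x := sqrt_nonneg _

lemma sd_sq (hx₀ : 0 ≤ x) (hx₁ : x ≤ 1) : sd x ^ 2 = x * (1 - x) :=
  sq_sqrt (by nlinarith)

lemma sd_pos (hx₀ : 0 < x) (hx₁ : x < 1) : 0 < sd x :=
  sqrt_pos.2 (by nlinarith)

lemma sd_le_half (x : ℝ) : sd x ≤ 1 / 2 := by
  rw [sd, sqrt_le_left (by norm_num)]
  nlinarith [sq_nonneg (2 * x - 1)]

@[simp] lemma sd_zero : sd 0 = 0 := by simp [sd]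

@[fun_prop]
lemma continuous_sd : Continuous sd := by unfold sd; fun_prop

lemma hasDerivAt_sd (hx₀ : 0 < x) (hx₁ : x < 1) :
    HasDerivAt sd ((1 - 2 * x) / (2 * sd x)) x := by
  have h : HasDerivAt (fun y : ℝ => y * (1 - y)) (1 - 2 * x) x := by
    refine ((hasDerivAt_id x).fun_mul
      ((hasDerivAt_const x 1).fun_sub (hasDerivAt_id x))).congr_deriv ?_
    simp only [id]; ring
  exact h.sqrt (by nlinarith)

lemma sq_sqrt_sub_sqrt_eq_xi (hθ₀ : 0 ≤ θ) (hθ₁ : θ ≤ 1) (hx₀ : 0 ≤ x) (hx₁ : x ≤ 1) :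
    (√(θ * (1 - x)) - √(x * (1 - θ))) ^ 2 = xi θ x := by
  have hprod : √(θ * (1 - x)) * √(x * (1 - θ)) = sd θ * sd x := by
    rw [sd, sd, ← sqrt_mul (by nlinarith), ← sqrt_mul (by nlinarith)]
    congr 1; ring
  rw [sub_sq, sq_sqrt (by nlinarith), sq_sqrt (by nlinarith), mul_assoc, hprod, xi]
  ring

lemma xi_pos (hθ₁ : θ ≤ 1) (hx₀ : 0 ≤ x) (hxθ : x < θ) : 0 < xi θ x := by
  rw [← sq_sqrt_sub_sqrt_eq_xi (hx₀.trans hxθ.le) hθ₁ hx₀ (hxθ.le.trans hθ₁)]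
  have : √(x * (1 - θ)) < √(θ * (1 - x)) := sqrt_lt_sqrt (by nlinarith) (by nlinarith)
  exact pow_pos (sub_pos.2 this) 2

lemma xi_le_self (hθ : 1 / 2 ≤ θ) (hx₀ : 0 ≤ x) : xi θ x ≤ θ := by
  have := mul_nonneg (sd_nonneg θ) (sd_nonneg x)
  rw [xi]; nlinarith

lemma xi_mem_Ioo (hθ : 1 / 2 ≤ θ) (hθ₁ : θ < 1) (hx₀ : 0 ≤ x) (hxθ : x < θ) :
    xi θ x ∈ Ioo 0 1 :=
  ⟨xi_pos hθ₁.le hx₀ hxθ, (xi_le_self hθ hx₀).trans_lt hθ₁⟩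

@[simp] lemma xi_zero (θ : ℝ) : xi θ 0 = θ := by simp [xi]

@[fun_prop]
lemma continuous_xi (θ : ℝ) : Continuous (xi θ) := by unfold xi; fun_prop

lemma sd_xi (hθ : 1 / 2 ≤ θ) (hθ₁ : θ ≤ 1) (hx₀ : 0 ≤ x) (hxθ : x ≤ θ) :
    sd (xi θ x) = sd θ * (1 - 2 * x) + (2 * θ - 1) * sd x := by
  have hsθ := sd_sq (by linarith) hθ₁
  have hsx := sd_sq hx₀ (by linarith)
  have hnonneg : 0 ≤ sd θ * (1 - 2 * x) + (2 * θ - 1) * sd x := by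
    rcases le_or_gt x (1 / 2) with hx | hx
    · have := sd_nonneg θ; have := sd_nonneg x; nlinarith
    · have hsq : (sd θ * (2 * x - 1)) ^ 2 ≤ ((2 * θ - 1) * sd x) ^ 2 := by
        rw [mul_pow, mul_pow, hsθ, hsx]
        nlinarith [mul_nonneg (by linarith : 0 ≤ x - (1 - θ)) (sub_nonneg.2 hxθ)]
      linarith [le_of_sq_le_sq hsq (mul_nonneg (by linarith) (sd_nonneg x))]
  rw [sd, ← sqrt_sq hnonneg]
  congr 1
  rw [xi]
  linear_combination (-4 * sd x ^ 2 - (1 - 2 * x) ^ 2) * hsθ - hsx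

lemma hasDerivAt_xi (hx₀ : 0 < x) (hx₁ : x < 1) : HasDerivAt (xi θ) (xiDeriv θ x) x := by
  have := (sd_pos hx₀ hx₁).ne'
  refine ((((hasDerivAt_id x).const_mul (1 - 2 * θ)).const_add θ).sub
    ((hasDerivAt_sd hx₀ hx₁).const_mul (2 * sd θ))).congr_deriv ?_
  rw [xiDeriv]
  field_simp

lemma hasDerivAt_xiDeriv (hx₀ : 0 < x) (hx₁ : x < 1) :
    HasDerivAt (xiDeriv θ) (sd θ / (2 * sd x ^ 3)) x := by
  have hs := (sd_pos hx₀ hx₁).ne'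
  have hnum : HasDerivAt (fun y => sd θ * (1 - 2 * y)) (sd θ * (-2)) x := by
    simpa using (((hasDerivAt_id x).const_mul 2).const_sub 1).const_mul (sd θ)
  refine ((hasDerivAt_const x (1 - 2 * θ)).sub
    (hnum.div (hasDerivAt_sd hx₀ hx₁) hs)).congr_deriv ?_
  field_simp
  linear_combination (4 * sd θ) * sd_sq hx₀.le hx₁.le

@[fun_prop]
lemma continuous_entropy (θ : ℝ) : Continuous (entropy θ) := by unfold entropy; fun_prop

lemma hasDerivAt_entropy {y : ℝ} (hy₀ : 0 < y) (hy₁ : y < 1) :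
    HasDerivAt (entropy θ) (entropyDeriv θ y) y := by
  have h₁ : HasDerivAt (fun z => negMulLog (1 - z)) (-(-log (1 - y) - 1)) y := by
    simpa [Function.comp_def] using (hasDerivAt_negMulLog (sub_pos.2 hy₁).ne').comp y
      ((hasDerivAt_id y).const_sub 1)
  refine (((hasDerivAt_id y).mul_const _).add (hasDerivAt_negMulLog hy₀.ne')).add h₁
    |>.congr_deriv ?_
  rw [entropyDeriv]
  ring

lemma entropyDeriv_self (hθ₀ : 0 < θ) (hθ₁ : θ < 1) : entropyDeriv θ θ = 0 := by
  rw [entropyDeriv, log_div hθ₀.ne' (sub_pos.2 hθ₁).ne']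
  ring

lemma continuous_alpha (θ : ℝ) : Continuous (alpha θ) := by unfold alpha; fun_prop

lemma curvature_zero (hθ₀ : 0 < θ) (hθ₁ : θ < 1) : curvature θ 0 = 0 := by
  simp [curvature, entropyDeriv_self hθ₀ hθ₁]

section

variable (hθ : 1 / 2 ≤ θ) (hθ₁ : θ < 1)
include hθ hθ₁

lemma xiDeriv_eq (hx₀ : 0 < x) (hxθ : x ≤ θ) : xiDeriv θ x = -sd (xi θ x) / sd x := by
  have := (sd_pos hx₀ (by linarith)).ne'
  rw [sd_xi hθ hθ₁.le hx₀.le hxθ, xiDeriv]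
  field_simp
  ring

lemma hasDerivAt_entropyDeriv_xi (hx : x ∈ Ioo 0 θ) :
    HasDerivAt (fun z => entropyDeriv θ (xi θ z)) (1 / (sd x * sd (xi θ x))) x := by
  obtain ⟨hξ₀, hξ₁⟩ := xi_mem_Ioo hθ hθ₁ hx.1.le hx.2
  have hξ := hasDerivAt_xi (θ := θ) hx.1 (hx.2.trans hθ₁)
  refine (((hξ.log hξ₀.ne').const_sub _).add
    ((hξ.const_sub 1).log (sub_pos.2 hξ₁).ne')).congr_deriv ?_
  have := (sd_pos hx.1 (hx.2.trans hθ₁)).ne'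
  have := (sd_pos hξ₀ hξ₁).ne'
  rw [xiDeriv_eq hθ hθ₁ hx.1 hx.2.le]
  field_simp
  rw [sd_sq hξ₀.le hξ₁.le]
  ring

lemma hasDerivAt_alpha (hx : x ∈ Ioo 0 θ) : HasDerivAt (alpha θ) (alphaDeriv θ x) x := by
  obtain ⟨hξ₀, hξ₁⟩ := xi_mem_Ioo hθ hθ₁ hx.1.le hx.2
  exact (hasDerivAt_entropy hξ₀ hξ₁).comp x (hasDerivAt_xi hx.1 (hx.2.trans hθ₁))

lemma hasDerivAt_alphaDeriv (hx : x ∈ Ioo 0 θ) :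
    HasDerivAt (alphaDeriv θ) (sd θ / (2 * sd x ^ 3) * curvature θ x) x := by
  have hx₁ := hx.2.trans hθ₁
  obtain ⟨hξ₀, hξ₁⟩ := xi_mem_Ioo hθ hθ₁ hx.1.le hx.2
  refine ((hasDerivAt_entropyDeriv_xi hθ hθ₁ hx).mul
    (hasDerivAt_xiDeriv hx.1 hx₁)).congr_deriv ?_
  have := (sd_pos hx.1 hx₁).ne'
  have := (sd_pos (by linarith) hθ₁).ne'
  have := (sd_pos hξ₀ hξ₁).ne'
  rw [xiDeriv_eq hθ hθ₁ hx.1 hx.2.le, curvature]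
  field_simp
  ring

lemma continuousOn_curvature : ContinuousOn (curvature θ) (Ico 0 θ) := by
  intro x hx
  obtain ⟨hξ₀, hξ₁⟩ := xi_mem_Ioo hθ hθ₁ hx.1 hx.2
  refine ContinuousAt.continuousWithinAt ?_
  unfold curvature entropyDeriv
  fun_prop (disch := first | exact hξ₀.ne' | exact (sub_pos.2 hξ₁).ne')

lemma hasDerivAt_curvature (hx : x ∈ Ioo 0 θ) :
    HasDerivAt (curvature θ) (curvatureDeriv θ x) x := by
  have hx₁ := hx.2.trans hθ₁
  obtain ⟨hξ₀, hξ₁⟩ := xi_mem_Ioo hθ hθ₁ hx.1.le hx.2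
  refine ((hasDerivAt_entropyDeriv_xi hθ hθ₁ hx).sub
    (((hasDerivAt_sd hx.1 hx₁).const_mul 2).div_const (sd θ))).congr_deriv ?_
  have := (sd_pos hx.1 hx₁).ne'
  have := (sd_pos (by linarith) hθ₁).ne'
  have := (sd_pos hξ₀ hξ₁).ne'
  rw [curvatureDeriv]
  field_simp
  rw [sd_xi hθ hθ₁.le hx.1.le hx.2.le]
  linear_combination (-4 * sd θ) * sd_sq hx.1.le hx₁.le

lemma sq_sub_sq_curvatureDeriv_numerator (hx₀ : 0 ≤ x) (hx₁ : x ≤ 1) :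
    (4 * sd θ * sd x) ^ 2 - ((2 * θ - 1) * (1 - 2 * x)) ^ 2 = (2 * sd θ) ^ 2 - (1 - 2 * x) ^ 2 := by
  rw [mul_pow, mul_pow, mul_pow, mul_pow, sd_sq hx₀ hx₁, sd_sq (by linarith) hθ₁.le]
  ring

lemma curvatureDeriv_numerator_neg (hx₀ : 0 < x) (hx : x < 1 / 2 - sd θ) :
    4 * sd θ * sd x - (2 * θ - 1) * (1 - 2 * x) < 0 := by
  have := sd_nonneg θ
  have := sq_sub_sq_curvatureDeriv_numerator hθ hθ₁ hx₀.le (by linarith)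
  have hsq : (4 * sd θ * sd x) ^ 2 < ((2 * θ - 1) * (1 - 2 * x)) ^ 2 := by nlinarith
  linarith [lt_of_pow_lt_pow_left₀ 2 (by nlinarith) hsq]

lemma curvatureDeriv_numerator_pos (hx : 1 / 2 - sd θ < x) (hx₁ : x < 1) :
    0 < 4 * sd θ * sd x - (2 * θ - 1) * (1 - 2 * x) := by
  have hsθ := sd_pos (by linarith) hθ₁
  have := sd_le_half θ
  have hsx := sd_pos (by linarith) hx₁
  rcases le_or_gt (1 / 2) x with hx' | hx'
  · nlinarith [mul_pos hsθ hsx]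
  · have := sq_sub_sq_curvatureDeriv_numerator hθ hθ₁ (by linarith) hx₁.le
    have hsq : ((2 * θ - 1) * (1 - 2 * x)) ^ 2 < (4 * sd θ * sd x) ^ 2 := by nlinarith
    linarith [lt_of_pow_lt_pow_left₀ 2 (by positivity) hsq]

lemma strictAntiOn_curvature : StrictAntiOn (curvature θ) (Icc 0 (1 / 2 - sd θ)) := by
  have hsθ := sd_pos (by linarith) hθ₁
  refine strictAntiOn_of_hasDerivWithinAt_neg (f' := curvatureDeriv θ) (convex_Icc _ _)
    ((continuousOn_curvature hθ hθ₁).mono (Icc_subset_Ico_right (by linarith)))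
    (fun x hx => ?_) (fun x hx => ?_) <;>
  rw [interior_Icc] at hx <;>
  have hxθ : x ∈ Ioo 0 θ := ⟨hx.1, by linarith [hx.2]⟩
  · exact (hasDerivAt_curvature hθ hθ₁ hxθ).hasDerivWithinAt
  · obtain ⟨hξ₀, hξ₁⟩ := xi_mem_Ioo hθ hθ₁ hxθ.1.le hxθ.2
    exact div_neg_of_neg_of_pos (curvatureDeriv_numerator_neg hθ hθ₁ hx.1 hx.2)
      (mul_pos hsθ (sd_pos hξ₀ hξ₁))

lemma strictMonoOn_curvature : StrictMonoOn (curvature θ) (Ico (1 / 2 - sd θ) θ) := by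
  have hsθ := sd_pos (by linarith) hθ₁
  have := sd_le_half θ
  refine strictMonoOn_of_hasDerivWithinAt_pos (f' := curvatureDeriv θ) (convex_Ico _ _)
    ((continuousOn_curvature hθ hθ₁).mono (Ico_subset_Ico_left (by linarith)))
    (fun x hx => ?_) (fun x hx => ?_) <;>
  rw [interior_Ico] at hx <;>
  have hxθ : x ∈ Ioo 0 θ := ⟨by linarith [hx.1], hx.2⟩
  · exact (hasDerivAt_curvature hθ hθ₁ hxθ).hasDerivWithinAt
  · obtain ⟨hξ₀, hξ₁⟩ := xi_mem_Ioo hθ hθ₁ hxθ.1.le hxθ.2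
    exact div_pos (curvatureDeriv_numerator_pos hθ hθ₁ hx.1 (hx.2.trans hθ₁))
      (mul_pos hsθ (sd_pos hξ₀ hξ₁))

lemma curvature_nonpos (hx : x ∈ Icc 0 (1 / 2 - sd θ)) : curvature θ x ≤ 0 := by
  simpa [curvature_zero (by linarith : 0 < θ) hθ₁] using
    (strictAntiOn_curvature hθ hθ₁).antitoneOn ⟨le_rfl, hx.1.trans hx.2⟩ hx hx.1

lemma convexOn_alpha {a b : ℝ} (ha : 0 ≤ a) (hb : b ≤ θ)
    (hcurv : ∀ x ∈ Ioo a b, 0 ≤ curvature θ x) : ConvexOn ℝ (Icc a b) (alpha θ) := by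
  have hsub : ∀ x ∈ interior (Icc a b), x ∈ Ioo 0 θ := fun x hx => by
    rw [interior_Icc] at hx; exact ⟨ha.trans_lt hx.1, hx.2.trans_le hb⟩
  refine convexOn_of_hasDerivWithinAt2_nonneg (convex_Icc a b) (continuous_alpha θ).continuousOn
    (fun x hx => (hasDerivAt_alpha hθ hθ₁ (hsub x hx)).hasDerivWithinAt)
    (fun x hx => (hasDerivAt_alphaDeriv hθ hθ₁ (hsub x hx)).hasDerivWithinAt) fun x hx => ?_
  have := sd_pos (hsub x hx).1 ((hsub x hx).2.trans hθ₁)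
  have := sd_pos (by linarith) hθ₁
  rw [interior_Icc] at hx
  exact mul_nonneg (by positivity) (hcurv x hx)

lemma concaveOn_alpha {a b : ℝ} (ha : 0 ≤ a) (hb : b ≤ θ)
    (hcurv : ∀ x ∈ Ioo a b, curvature θ x ≤ 0) : ConcaveOn ℝ (Icc a b) (alpha θ) := by
  have hsub : ∀ x ∈ interior (Icc a b), x ∈ Ioo 0 θ := fun x hx => by
    rw [interior_Icc] at hx; exact ⟨ha.trans_lt hx.1, hx.2.trans_le hb⟩
  refine concaveOn_of_hasDerivWithinAt2_nonpos (convex_Icc a b) (continuous_alpha θ).continuousOn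
    (fun x hx => (hasDerivAt_alpha hθ hθ₁ (hsub x hx)).hasDerivWithinAt)
    (fun x hx => (hasDerivAt_alphaDeriv hθ hθ₁ (hsub x hx)).hasDerivWithinAt) fun x hx => ?_
  have := sd_pos (hsub x hx).1 ((hsub x hx).2.trans hθ₁)
  have := sd_pos (by linarith) hθ₁
  rw [interior_Icc] at hx
  exact mul_nonpos_of_nonneg_of_nonpos (by positivity) (hcurv x hx)

lemma sd_sq_two_mul_sub_one : sd ((2 * θ - 1) ^ 2) = 2 * (2 * θ - 1) * sd θ := by
  rw [sd, ← sqrt_sq (by nlinarith [sd_nonneg θ] : 0 ≤ 2 * (2 * θ - 1) * sd θ)]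
  congr 1
  rw [mul_pow, sd_sq (by linarith) hθ₁.le]
  ring

lemma xi_sq_two_mul_sub_one : xi θ ((2 * θ - 1) ^ 2) = 1 - θ := by
  rw [xi, sd_sq_two_mul_sub_one hθ hθ₁]
  linear_combination (-4 * (2 * θ - 1)) * sd_sq (by linarith) hθ₁.le

end

lemma two_mul_lt_log_one_add_div_one_sub {t : ℝ} (ht₀ : 0 < t) (ht₁ : t < 1) :
    2 * t < log ((1 + t) / (1 - t)) := by
  have := sum_range_le_log_div ht₀.le ht₁ 2
  simp only [Finset.sum_range_succ, Finset.sum_range_zero] at this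
  nlinarith [pow_pos ht₀ 3]

lemma curvature_sq_two_mul_sub_one_pos (hθ : 1 / 2 < θ) (hθ₁ : θ < 1) :
    0 < curvature θ ((2 * θ - 1) ^ 2) := by
  have := sd_pos (by linarith) hθ₁
  have hlog := two_mul_lt_log_one_add_div_one_sub (t := 2 * θ - 1) (by linarith) (by linarith)
  rw [show 1 + (2 * θ - 1) = 2 * θ by ring, show 1 - (2 * θ - 1) = 2 * (1 - θ) by ring,
    mul_div_mul_left _ _ two_ne_zero] at hlog
  rw [curvature, entropyDeriv, xi_sq_two_mul_sub_one hθ.le hθ₁, sd_sq_two_mul_sub_one hθ.le hθ₁,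
    sub_sub_cancel, log_div (by linarith) (by linarith)] at *
  field_simp
  linarith

theorem convexOn_alpha_half : ConvexOn ℝ (Icc 0 (1 / 2)) (alpha (1 / 2)) := by
  have hsd : sd (1 / 2) = 1 / 2 := by norm_num [sd, sqrt_eq_iff_mul_self_eq]
  have hmono := strictMonoOn_curvature (θ := 1 / 2) le_rfl (by norm_num)
  rw [hsd, sub_self] at hmono
  refine convexOn_alpha (by norm_num) (by norm_num) le_rfl le_rfl fun x hx => ?_
  have := hmono ⟨le_rfl, by norm_num⟩ ⟨hx.1.le, hx.2⟩ hx.1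
  rw [curvature_zero (by norm_num) (by norm_num)] at this
  exact this.le

theorem exists_concaveOn_convexOn_alpha (hθ : 1 / 2 < θ) (hθ₁ : θ < 1) :
    ∃ δ, 1 / 2 - sd θ < δ ∧ δ < (2 * θ - 1) ^ 2 ∧
      ConcaveOn ℝ (Icc 0 δ) (alpha θ) ∧ ConvexOn ℝ (Icc δ θ) (alpha θ) := by
  have hsθ : sd θ < 1 / 2 := by
    rw [sd, sqrt_lt' (by norm_num)]; nlinarith
  set x₀ := 1 / 2 - sd θ
  set x₂ := (2 * θ - 1) ^ 2
  have hx₀ : 0 < x₀ := sub_pos.2 hsθ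
  have hx₂θ : x₂ < θ := by nlinarith
  have hneg : curvature θ x₀ < 0 := by
    simpa [curvature_zero (by linarith : 0 < θ) hθ₁] using
      strictAntiOn_curvature hθ.le hθ₁ ⟨le_rfl, hx₀.le⟩ ⟨hx₀.le, le_rfl⟩ hx₀
  have hpos := curvature_sq_two_mul_sub_one_pos hθ hθ₁
  have hx₀₂ : x₀ < x₂ := by
    by_contra! h
    exact (curvature_nonpos hθ.le hθ₁ ⟨sq_nonneg _, h⟩).not_gt hpos
  have hcont : ContinuousOn (curvature θ) (Icc x₀ x₂) :=
    (continuousOn_curvature hθ.le hθ₁).mono (Icc_subset_Ico hx₀.le hx₂θ)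
  obtain ⟨δ, ⟨hx₀δ, hδx₂⟩, hδ⟩ := intermediate_value_Ioo hx₀₂.le hcont ⟨hneg, hpos⟩
  have hmono := strictMonoOn_curvature hθ.le hθ₁
  have hδmem : δ ∈ Ico x₀ θ := ⟨hx₀δ.le, hδx₂.trans hx₂θ⟩
  refine ⟨δ, hx₀δ, hδx₂, concaveOn_alpha hθ.le hθ₁ le_rfl hδmem.2.le fun x hx => ?_,
    convexOn_alpha hθ.le hθ₁ (hx₀.trans hx₀δ).le le_rfl fun x hx => ?_⟩
  · rcases le_or_gt x x₀ with hxx₀ | hxx₀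
    · exact curvature_nonpos hθ.le hθ₁ ⟨hx.1.le, hxx₀⟩
    · exact hδ ▸ (hmono ⟨hxx₀.le, hx.2.trans hδmem.2⟩ hδmem hx.2).le
  · exact hδ ▸ (hmono hδmem ⟨(hx₀δ.trans hx.1).le, hx.2⟩ hx.1).le

lemma sd_one_sub_one_div {q : ℝ} (hq : 0 < q) : sd (1 - 1 / q) = √(q - 1) / q := by
  rw [sd, show (1 - 1 / q) * (1 - (1 - 1 / q)) = (q - 1) / q ^ 2 by field_simp; ring,
    sqrt_div' _ (sq_nonneg q), sqrt_sq hq.le]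

lemma qEntropy_eq_entropy {q : ℕ} (hq : 2 ≤ q) (y : ℝ) :
    qEntropy q y = entropy (1 - 1 / q) y / log q := by
  have hq' : (2 : ℝ) ≤ q := by exact_mod_cast hq
  have hθ : (1 - 1 / (q : ℝ)) / (1 - (1 - 1 / q)) = q - 1 := by
    field_simp; ring
  rw [qEntropy, entropy, hθ, logb, logb, one_div (1 - y), log_inv]
  rcases eq_or_ne y 0 with rfl | hy
  · simp
  · rw [log_div (by linarith) hy, negMulLog, negMulLog]
    ring

lemma alphaMRRW_eqOn {q : ℕ} (hq : 2 ≤ q) :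
    EqOn (fun x => (log q)⁻¹ • alpha (1 - 1 / q) x) (alphaMRRW q) (Icc 0 1) := by
  intro x hx
  have hθ₀ : 0 ≤ 1 - 1 / (q : ℝ) :=
    sub_nonneg.2 (div_le_one_of_le₀ (by exact_mod_cast one_le_two.trans hq) (Nat.cast_nonneg q))
  rw [alphaMRRW, xiFn, sq_sqrt_sub_sqrt_eq_xi hθ₀ (sub_le_self _ (by positivity)) hx.1 hx.2,
    qEntropy_eq_entropy hq]
  exact (div_eq_inv_mul _ _).symm

end MRRW

open MRRW

theorem stmt19 (q : ℕ) (hq : 2 ≤ q) :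
    (q = 2 → ConvexOn ℝ (Set.Icc (0 : ℝ) (1 - 1 / (q : ℝ))) (alphaMRRW q)) ∧
    (3 ≤ q → ∃ δM : ℝ,
      1 / 2 - Real.sqrt ((q : ℝ) - 1) / (q : ℝ) < δM ∧
      δM < (1 - 2 / (q : ℝ)) ^ 2 ∧
      ConcaveOn ℝ (Set.Icc (0 : ℝ) δM) (alphaMRRW q) ∧
      ConvexOn ℝ (Set.Icc δM (1 - 1 / (q : ℝ))) (alphaMRRW q)) := by
  have hq' : (2 : ℝ) ≤ q := by exact_mod_cast hq
  have hθ₁ : 1 - 1 / (q : ℝ) < 1 := sub_lt_self 1 (by positivity)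
  have hlog : 0 ≤ (log q)⁻¹ := inv_nonneg.2 (log_nonneg (by linarith))
  have hEq := alphaMRRW_eqOn hq
  refine ⟨fun h2 => ?_, fun hq3 => ?_⟩
  · subst h2
    rw [show (1 : ℝ) - 1 / ((2 : ℕ) : ℝ) = 1 / 2 by norm_num] at hEq ⊢
    exact (convexOn_alpha_half.smul hlog).congr (hEq.mono (Icc_subset_Icc_right (by norm_num)))
  · have hθ : 1 / 2 < 1 - 1 / (q : ℝ) := by
      have : 1 / (q : ℝ) ≤ 1 / 3 := one_div_le_one_div_of_le (by norm_num) (by exact_mod_cast hq3)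
      linarith
    obtain ⟨δ, hδ₀, hδ₂, hcave, hvex⟩ := exists_concaveOn_convexOn_alpha hθ hθ₁
    have hδ : δ ∈ Icc 0 1 := ⟨by linarith [sd_le_half (1 - 1 / (q : ℝ))], by nlinarith⟩
    rw [sd_one_sub_one_div (by linarith)] at hδ₀
    rw [show 2 * (1 - 1 / (q : ℝ)) - 1 = 1 - 2 / q by ring] at hδ₂
    exact ⟨δ, hδ₀, hδ₂, (hcave.smul hlog).congr (hEq.mono (Icc_subset_Icc_right hδ.2)),
      (hvex.smul hlog).congr (hEq.mono (Icc_subset_Icc hδ.1 hθ₁.le))⟩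
end
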